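/- Let H be a compact Hausdorff topological group. Then the linear span of {Δ(f)·(1 ⊗ g) : f, g ∈ C(H)}, i.e. of the functions (x,y) ↦ f(xy)g(y), is dense in C(H × H, ℂ) with the uniform norm. -/

import Mathlib

/-!
The span of a star-closed submonoid of `C(X, 𝕜)` is the star subalgebra it generates, so by
Stone–Weierstrass it is dense as soon as it separates points. The functions `f (x * y) * g y`
form such a submonoid of `C(H × H, ℂ)`: the factors `g y` separate points with different second
coordinates, and the factors `f (x * y)` the others, by right cancellation.
-/

namespace ContinuousMap

theorem dense_span_of_star_mem_of_separatesPoints {X 𝕜 : Type*}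
    [TopologicalSpace X] [CompactSpace X] [RCLike 𝕜] (S : Submonoid C(X, 𝕜))
    (star_mem : ∀ F ∈ S, star F ∈ S) (sep : ∀ ⦃x y : X⦄, x ≠ y → ∃ F ∈ S, F x ≠ F y) :
    Dense (Submodule.span 𝕜 (S : Set C(X, 𝕜)) : Set C(X, 𝕜)) := by
  have adjoin_eq : (StarAlgebra.adjoin 𝕜 (S : Set C(X, 𝕜)) : Set C(X, 𝕜)) =
      Submodule.span 𝕜 (S : Set C(X, 𝕜)) := by
    have star_S : star (S : Set C(X, 𝕜)) = S :=
      Set.Subset.antisymm (fun F hF ↦ star_star F ▸ star_mem _ hF) fun F hF ↦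
        (star_star F).symm ▸ star_mem F hF
    have := congrArg SetLike.coe (StarAlgebra.adjoin_eq_span (R := 𝕜) (S : Set C(X, 𝕜)))
    rwa [star_S, Set.union_self, Submonoid.closure_eq] at this
  have closure_eq_top := starSubalgebra_topologicalClosure_eq_top_of_separatesPoints
    (StarAlgebra.adjoin 𝕜 (S : Set C(X, 𝕜))) fun x y hxy ↦ by
      obtain ⟨F, hFS, hF⟩ := sep hxy
      exact ⟨F, ⟨F, StarAlgebra.subset_adjoin 𝕜 _ hFS, rfl⟩, hF⟩
  rw [dense_iff_closure_eq, ← adjoin_eq, ← StarSubalgebra.topologicalClosure_coe, closure_eq_top]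
  rfl

theorem exists_apply_ne {X 𝕜 : Type*} [TopologicalSpace X] [T35Space X] [RCLike 𝕜]
    {x y : X} (h : x ≠ y) : ∃ f : C(X, 𝕜), f x ≠ f y := by
  obtain ⟨f, hf, hfxy⟩ := separatesPoints_continuous_of_t35Space h
  exact ⟨⟨fun z ↦ (f z : 𝕜), RCLike.continuous_ofReal.comp hf⟩, by simpa using hfxy⟩

variable (H 𝕜 : Type*) [TopologicalSpace H] [Mul H] [RCLike 𝕜]

/-- The functions `Δ(f) · (1 ⊗ g)`, i.e. `f ⊗ g` precomposed with the shear
`(x, y) ↦ (x * y, y)`. -/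
def shearProducts : Submonoid C(H × H, 𝕜) where
  carrier := {F | ∃ f g : C(H, 𝕜), ∀ x y : H, F (x, y) = f (x * y) * g y}
  one_mem' := ⟨1, 1, fun _ _ ↦ by simp⟩
  mul_mem' := by
    rintro F G ⟨f₁, g₁, hF⟩ ⟨f₂, g₂, hG⟩
    exact ⟨f₁ * f₂, g₁ * g₂, fun x y ↦ by simp [hF, hG, mul_mul_mul_comm]⟩

variable {H 𝕜}

theorem star_mem_shearProducts {F : C(H × H, 𝕜)} (hF : F ∈ shearProducts H 𝕜) :
    star F ∈ shearProducts H 𝕜 := by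
  obtain ⟨f, g, hfg⟩ := hF
  exact ⟨star f, star g, fun x y ↦ by simp [hfg]⟩

theorem shearProducts_separatesPoints [IsRightCancelMul H] [ContinuousMul H] [T35Space H]
    ⦃p q : H × H⦄ (hpq : p ≠ q) : ∃ F ∈ shearProducts H 𝕜, F p ≠ F q := by
  obtain ⟨x, y⟩ := p
  obtain ⟨x', y'⟩ := q
  by_cases hy : y = y'
  · subst hy
    have hxy : x * y ≠ x' * y := fun h ↦ hpq (by rw [mul_right_cancel h])
    obtain ⟨f, hf⟩ := exists_apply_ne (𝕜 := 𝕜) hxy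
    exact ⟨f.comp ⟨fun p ↦ p.1 * p.2, by fun_prop⟩, ⟨f, 1, fun _ _ ↦ by simp⟩, by simpa using hf⟩
  · obtain ⟨g, hg⟩ := exists_apply_ne (𝕜 := 𝕜) hy
    exact ⟨g.comp ⟨Prod.snd, continuous_snd⟩, ⟨1, g, fun _ _ ↦ by simp⟩, by simpa using hg⟩

end ContinuousMap

/-- For a compact Hausdorff topological group `H`, the linear span of the
functions `(x, y) ↦ f (x * y) * g y` (i.e. `Δ(f) · (1 ⊗ g)` for `f, g ∈ C(H)`) is
dense in `C(H × H, ℂ)` with the uniform norm. -/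
theorem dense_span_comult_mul_right (H : Type*) [TopologicalSpace H] [Group H]
    [IsTopologicalGroup H] [CompactSpace H] [T2Space H] :
    Dense (Submodule.span ℂ
      {F : C(H × H, ℂ) | ∃ f g : C(H, ℂ), ∀ x y : H, F (x, y) = f (x * y) * g y} :
      Set C(H × H, ℂ)) :=
  ContinuousMap.dense_span_of_star_mem_of_separatesPoints (ContinuousMap.shearProducts H ℂ)
    (fun _ ↦ ContinuousMap.star_mem_shearProducts) ContinuousMap.shearProducts_separatesPoints
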